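/- For every bipartite density matrix ρ_AB on ℂ^{d_A} ⊗ ℂ^{d_B}, every quantum channel Γ from d_A×d_A matrices to d_{A'}×d_{A'} matrices, and every k ≥ 1, the supremum over k-Bose-symmetric extendible channels Λ on d_B×d_B matrices of F((Γ ⊗ id_B)[ρ_AB], (id_{A'} ⊗ Λ)[(Γ ⊗ id_B)[ρ_AB]]) is greater than or equal to the supremum over k-Bose-symmetric extendible channels Λ of F(ρ_AB, (id_A ⊗ Λ)[ρ_AB]). -/

import Mathlib

open Matrix Filter
open scoped Kronecker ComplexOrder

noncomputable section

/-- The positive semidefinite square root of a matrix, extended by `0` to all matrices. -/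
noncomputable def msqrt {n : Type*} [Fintype n] [DecidableEq n] (A : Matrix n n ℂ) :
    Matrix n n ℂ :=
  open scoped Classical in
  if h : A.PosSemidef then
    (h.1.eigenvectorUnitary : Matrix n n ℂ) * diagonal ((↑) ∘ (Real.sqrt ∘ h.1.eigenvalues)) *
      (star h.1.eigenvectorUnitary : Matrix n n ℂ) else 0

/-- A density matrix: positive semidefinite with trace one. -/
def IsDensityMatrix {n : Type*} [Fintype n] [DecidableEq n] (ρ : Matrix n n ℂ) : Prop :=
  ρ.PosSemidef ∧ ρ.trace = 1

/-- The fidelity `F(ρ,σ) = Tr √(√ρ σ √ρ)` of two (density) matrices. -/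
noncomputable def Fid {n : Type*} [Fintype n] [DecidableEq n] (ρ σ : Matrix n n ℂ) : ℝ :=
  ((msqrt (msqrt ρ * σ * msqrt ρ)).trace).re

/-- The trace distance `Δ(ρ,σ) = (1/2) Tr √((ρ-σ)† (ρ-σ))`. -/
noncomputable def trDist {n : Type*} [Fintype n] [DecidableEq n] (ρ σ : Matrix n n ℂ) : ℝ :=
  (1 / 2) * ((msqrt ((ρ - σ)ᴴ * (ρ - σ))).trace).re

/-- A quantum channel: a linear map admitting a Kraus representation. -/
def IsQuantumChannel {m n : Type*} [Fintype m] [Fintype n] [DecidableEq m] [DecidableEq n]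
    (Λ : Matrix m m ℂ →ₗ[ℂ] Matrix n n ℂ) : Prop :=
  ∃ (N : ℕ) (K : Fin N → Matrix n m ℂ),
    (∀ X, Λ X = ∑ i, K i * X * (K i)ᴴ) ∧ (∑ i, (K i)ᴴ * K i = 1)

/-- The permutation matrix `P_π` on `(ℂ^d)^{⊗k}`. -/
def permMat (d k : ℕ) (π : Equiv.Perm (Fin k)) :
    Matrix (Fin k → Fin d) (Fin k → Fin d) ℂ :=
  Matrix.of fun f g => if f = g ∘ π then 1 else 0

/-- The orthogonal projector `Π⁺_k` onto the symmetric subspace of `(ℂ^d)^{⊗k}`. -/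
noncomputable def symProj (d k : ℕ) : Matrix (Fin k → Fin d) (Fin k → Fin d) ℂ :=
  ((k.factorial : ℂ))⁻¹ • ∑ π : Equiv.Perm (Fin k), permMat d k π

/-- Combine a value for the first tensor factor with values for the remaining factors. -/
def extendFirst {d k : ℕ} (a : Fin d) (h : {i : Fin k // (i : ℕ) ≠ 0} → Fin d) :
    Fin k → Fin d :=
  fun i => if hi : (i : ℕ) = 0 then a else h ⟨i, hi⟩

/-- The partial trace over the tensor factors `2,…,k` of a matrix on `(ℂ^d)^{⊗k}`. -/
noncomputable def ptrRest {d k : ℕ}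
    (W : Matrix (Fin k → Fin d) (Fin k → Fin d) ℂ) : Matrix (Fin d) (Fin d) ℂ :=
  Matrix.of fun a a' =>
    ∑ h : {i : Fin k // (i : ℕ) ≠ 0} → Fin d, W (extendFirst a h) (extendFirst a' h)

/-- A `k`-Bose-symmetric extendible channel on `d×d` matrices. -/
def IsBoseSymExtendible (d k : ℕ)
    (Λ : Matrix (Fin d) (Fin d) ℂ →ₗ[ℂ] Matrix (Fin d) (Fin d) ℂ) : Prop :=
  ∃ V : Matrix (Fin d) (Fin d) ℂ →ₗ[ℂ] Matrix (Fin k → Fin d) (Fin k → Fin d) ℂ,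
    IsQuantumChannel V ∧ (∀ X, symProj d k * V X * symProj d k = V X) ∧
    (∀ X, Λ X = ptrRest (V X))

/-- An entanglement-breaking (measure-and-prepare) channel on `d×d` matrices. -/
def IsEBChannel (d : ℕ)
    (Λ : Matrix (Fin d) (Fin d) ℂ →ₗ[ℂ] Matrix (Fin d) (Fin d) ℂ) : Prop :=
  ∃ (N : ℕ) (M : Fin N → Matrix (Fin d) (Fin d) ℂ) (β : Fin N → (Fin d → ℂ)),
    (∀ y, (M y).PosSemidef) ∧ (∑ y, M y = 1) ∧ (∀ y, star (β y) ⬝ᵥ β y = 1) ∧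
    (∀ X, Λ X = ∑ y, ((M y * X).trace) • vecMulVec (β y) (star (β y)))

/-- `(id_A ⊗ Λ)[ρ]`: a map acting on the `B` tensor factor of a bipartite matrix. -/
noncomputable def idTensor {dA dB dB' : ℕ}
    (Λ : Matrix (Fin dB) (Fin dB) ℂ →ₗ[ℂ] Matrix (Fin dB') (Fin dB') ℂ)
    (ρ : Matrix (Fin dA × Fin dB) (Fin dA × Fin dB) ℂ) :
    Matrix (Fin dA × Fin dB') (Fin dA × Fin dB') ℂ :=
  Matrix.of fun p q => Λ (Matrix.of fun b b' => ρ (p.1, b) (q.1, b')) p.2 q.2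

/-- `(Γ ⊗ id_B)[ρ]`: a map acting on the `A` tensor factor of a bipartite matrix. -/
noncomputable def tensorId {dA dA' dB : ℕ}
    (Γ : Matrix (Fin dA) (Fin dA) ℂ →ₗ[ℂ] Matrix (Fin dA') (Fin dA') ℂ)
    (ρ : Matrix (Fin dA × Fin dB) (Fin dA × Fin dB) ℂ) :
    Matrix (Fin dA' × Fin dB) (Fin dA' × Fin dB) ℂ :=
  Matrix.of fun p q => Γ (Matrix.of fun a a' => ρ (a, p.2) (a', q.2)) p.1 q.1

/-- Supremum of `F(ρ, (id ⊗ Λ)[ρ])` over `k`-Bose-symmetric extendible channels `Λ`. -/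
noncomputable def symSup (dA dB k : ℕ)
    (ρ : Matrix (Fin dA × Fin dB) (Fin dA × Fin dB) ℂ) : ℝ :=
  sSup {x : ℝ | ∃ Λ, IsBoseSymExtendible dB k Λ ∧ x = Fid ρ (idTensor Λ ρ)}

/-- Supremum of `F(ρ, (id ⊗ Λ)[ρ])` over entanglement-breaking channels `Λ`. -/
noncomputable def ebSup (dA dB : ℕ)
    (ρ : Matrix (Fin dA × Fin dB) (Fin dA × Fin dB) ℂ) : ℝ :=
  sSup {x : ℝ | ∃ Λ, IsEBChannel dB Λ ∧ x = Fid ρ (idTensor Λ ρ)}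

/-- A quantum-classical bipartite state. -/
def IsQuantumClassical {dA dB : ℕ}
    (ρ : Matrix (Fin dA × Fin dB) (Fin dA × Fin dB) ℂ) : Prop :=
  ∃ (N : ℕ) (p : Fin N → ℝ) (σ : Fin N → Matrix (Fin dA) (Fin dA) ℂ)
    (b : Fin N → (Fin dB → ℂ)),
    (∀ i, 0 ≤ p i) ∧ (∑ i, p i = 1) ∧ (∀ i, IsDensityMatrix (σ i)) ∧
    (∀ i j, star (b i) ⬝ᵥ b j = if i = j then 1 else 0) ∧
    ρ = ∑ i, (p i : ℂ) • (σ i ⊗ₖ vecMulVec (b i) (star (b i)))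

/-- The Choi matrix `J(Λ) = ∑_{x,x'} |x⟩⟨x'| ⊗ Λ(|x⟩⟨x'|)`. -/
noncomputable def choiMatrix {d : ℕ} {Y : Type*} [Fintype Y] [DecidableEq Y]
    (Λ : Matrix (Fin d) (Fin d) ℂ →ₗ[ℂ] Matrix Y Y ℂ) :
    Matrix (Fin d × Y) (Fin d × Y) ℂ :=
  Matrix.of fun p q => Λ (Matrix.single p.1 q.1 1) p.2 q.2

/-- A `k`-Bose-symmetric extension (on the output system) of a matrix on `ℂ^d ⊗ ℂ^d`. -/
def HasBoseSymExtension {d : ℕ} (k : ℕ)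
    (W : Matrix (Fin d × Fin d) (Fin d × Fin d) ℂ) : Prop :=
  ∃ Wt : Matrix (Fin d × (Fin k → Fin d)) (Fin d × (Fin k → Fin d)) ℂ,
    Wt.PosSemidef ∧
    ((1 : Matrix (Fin d) (Fin d) ℂ) ⊗ₖ symProj d k) * Wt *
        ((1 : Matrix (Fin d) (Fin d) ℂ) ⊗ₖ symProj d k) = Wt ∧
    (∀ x x' b b', W (x, b) (x', b') =
      ∑ h : {i : Fin k // (i : ℕ) ≠ 0} → Fin d,
        Wt (x, extendFirst b h) (x', extendFirst b' h))

/-- The `k`-fold tensor power of a vector in `ℂ^d`. -/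
def vecPow {d : ℕ} (k : ℕ) (v : Fin d → ℂ) : (Fin k → Fin d) → ℂ :=
  fun f => ∏ i, v (f i)

end

namespace Stmt15Aux
variable {n : Type*} [Fintype n] [DecidableEq n]

noncomputable def specFun {A : Matrix n n ℂ} (hA : A.IsHermitian) (f : ℝ → ℝ) : Matrix n n ℂ :=
  (hA.eigenvectorUnitary : Matrix n n ℂ) * Matrix.diagonal (fun i => (f (hA.eigenvalues i) : ℂ)) *
    star (hA.eigenvectorUnitary : Matrix n n ℂ)

variable {A : Matrix n n ℂ}

lemma star_mul_self_eigen (hA : A.IsHermitian) :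
    star (hA.eigenvectorUnitary : Matrix n n ℂ) * (hA.eigenvectorUnitary : Matrix n n ℂ) = 1 :=
  (Matrix.mem_unitaryGroup_iff').mp (hA.eigenvectorUnitary).2

lemma mul_star_self_eigen (hA : A.IsHermitian) :
    (hA.eigenvectorUnitary : Matrix n n ℂ) * star (hA.eigenvectorUnitary : Matrix n n ℂ) = 1 :=
  (Matrix.mem_unitaryGroup_iff).mp (hA.eigenvectorUnitary).2

lemma specFun_mul (hA : A.IsHermitian) (f g : ℝ → ℝ) :
    specFun hA f * specFun hA g = specFun hA (fun x => f x * g x) := by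
  unfold specFun
  simp only [mul_assoc]
  rw [show star (hA.eigenvectorUnitary : Matrix n n ℂ) * ((hA.eigenvectorUnitary : Matrix n n ℂ) *
      (Matrix.diagonal (fun i => (g (hA.eigenvalues i) : ℂ)) * star (hA.eigenvectorUnitary : Matrix n n ℂ)))
      = Matrix.diagonal (fun i => (g (hA.eigenvalues i) : ℂ)) * star (hA.eigenvectorUnitary : Matrix n n ℂ) by
    rw [← mul_assoc, star_mul_self_eigen hA, one_mul]]
  rw [← mul_assoc (Matrix.diagonal _), Matrix.diagonal_mul_diagonal]
  push_cast
  rfl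

lemma specFun_isHermitian (hA : A.IsHermitian) (f : ℝ → ℝ) : (specFun hA f).IsHermitian := by
  unfold specFun
  unfold Matrix.IsHermitian
  rw [Matrix.conjTranspose_mul, Matrix.conjTranspose_mul, Matrix.diagonal_conjTranspose]
  have : (star fun i => ((f (hA.eigenvalues i) : ℝ) : ℂ)) = fun i => ((f (hA.eigenvalues i) : ℝ) : ℂ) := by
    funext i; simp [Pi.star_apply, Complex.conj_ofReal]
  rw [this]
  simp [Matrix.star_eq_conjTranspose, mul_assoc]

lemma specFun_id (hA : A.IsHermitian) : specFun hA (fun x => x) = A := by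
  unfold specFun
  have h := hA.spectral_theorem
  rw [Unitary.conjStarAlgAut_apply] at h
  exact h.symm

lemma specFun_one (hA : A.IsHermitian) : specFun hA (fun _ => 1) = 1 := by
  unfold specFun
  simp [mul_star_self_eigen hA]

lemma specFun_trace (hA : A.IsHermitian) (f : ℝ → ℝ) :
    (specFun hA f).trace = ∑ i, (f (hA.eigenvalues i) : ℂ) := by
  unfold specFun
  rw [Matrix.trace_mul_cycle, star_mul_self_eigen hA, one_mul, Matrix.trace_diagonal]

lemma specFun_congr (hA : A.IsHermitian) {f g : ℝ → ℝ}
    (h : ∀ i, f (hA.eigenvalues i) = g (hA.eigenvalues i)) : specFun hA f = specFun hA g := by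
  unfold specFun
  have : (fun i => ((f (hA.eigenvalues i) : ℝ) : ℂ)) = fun i => ((g (hA.eigenvalues i) : ℝ) : ℂ) :=
    funext fun i => by rw [h i]
  rw [this]

lemma specFun_posSemidef (hA : A.IsHermitian) {f : ℝ → ℝ}
    (hf : ∀ i, 0 ≤ f (hA.eigenvalues i)) : (specFun hA f).PosSemidef := by
  unfold specFun
  rw [Matrix.star_eq_conjTranspose]
  exact (Matrix.posSemidef_diagonal_iff.mpr (fun i => by
    simpa using Complex.zero_le_real.mpr (hf i))).mul_mul_conjTranspose_same _

lemma specFun_sub (hA : A.IsHermitian) (f g : ℝ → ℝ) :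
    specFun hA (fun x => f x - g x) = specFun hA f - specFun hA g := by
  unfold specFun
  rw [← Matrix.sub_mul, ← Matrix.mul_sub]
  congr 2
  rw [Matrix.diagonal_sub]
  congr 1 <;> funext i
  push_cast; ring

end Stmt15Aux

namespace Stmt15Aux
open Matrix
open scoped ComplexOrder
variable {n : Type*} [Fintype n] [DecidableEq n] {A : Matrix n n ℂ}

/-- pseudo-inverse of sqrt eigenvalue function -/
noncomputable def gInv (x : ℝ) : ℝ := if x = 0 then 0 else (Real.sqrt x)⁻¹
/-- support indicator function -/
noncomputable def suppf (x : ℝ) : ℝ := if x = 0 then 0 else 1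
/-- pseudo-inverse function -/
noncomputable def invf (x : ℝ) : ℝ := if x = 0 then 0 else x⁻¹

noncomputable def _root_.Matrix.PosSemidef.sqrt (hA : A.PosSemidef) : Matrix n n ℂ :=
  (hA.1.eigenvectorUnitary : Matrix n n ℂ) * diagonal ((↑) ∘ (Real.sqrt ∘ hA.1.eigenvalues)) *
      (star hA.1.eigenvectorUnitary : Matrix n n ℂ)

lemma sqrt_eq_specFun (hA : A.PosSemidef) : hA.sqrt = specFun hA.1 Real.sqrt := rfl

lemma _root_.Matrix.PosSemidef.posSemidef_sqrt (hA : A.PosSemidef) : hA.sqrt.PosSemidef := by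
  rw [sqrt_eq_specFun]
  exact specFun_posSemidef hA.1 (fun i => Real.sqrt_nonneg _)

lemma _root_.Matrix.PosSemidef.sqrt_mul_self (hA : A.PosSemidef) : hA.sqrt * hA.sqrt = A := by
  rw [sqrt_eq_specFun, specFun_mul]
  rw [specFun_congr hA.1 (g := fun x => x) (fun i => Real.mul_self_sqrt (hA.eigenvalues_nonneg i)),
    specFun_id]

noncomputable def pinvS (hA : A.PosSemidef) : Matrix n n ℂ := specFun hA.1 gInv
noncomputable def suppS (hA : A.PosSemidef) : Matrix n n ℂ := specFun hA.1 suppf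

lemma pinvS_isHermitian (hA : A.PosSemidef) : (pinvS hA).IsHermitian := specFun_isHermitian _ _
lemma suppS_isHermitian (hA : A.PosSemidef) : (suppS hA).IsHermitian := specFun_isHermitian _ _

lemma pinvS_mul_sqrt (hA : A.PosSemidef) : pinvS hA * hA.sqrt = suppS hA := by
  rw [pinvS, sqrt_eq_specFun hA, specFun_mul]
  refine specFun_congr hA.1 fun i => ?_
  have h0 := hA.eigenvalues_nonneg i
  by_cases hx : hA.1.eigenvalues i = 0
  · simp [gInv, suppf, hx]
  · have : Real.sqrt (hA.1.eigenvalues i) ≠ 0 := by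
      simpa [Real.sqrt_eq_zero h0] using hx
    simp [gInv, suppf, hx, inv_mul_cancel₀ this]

lemma sqrt_mul_pinvS (hA : A.PosSemidef) : hA.sqrt * pinvS hA = suppS hA := by
  rw [pinvS, sqrt_eq_specFun hA, specFun_mul]
  refine specFun_congr hA.1 fun i => ?_
  have h0 := hA.eigenvalues_nonneg i
  by_cases hx : hA.1.eigenvalues i = 0
  · simp [gInv, suppf, hx]
  · have : Real.sqrt (hA.1.eigenvalues i) ≠ 0 := by
      simpa [Real.sqrt_eq_zero h0] using hx
    simp [gInv, suppf, hx, mul_inv_cancel₀ this]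

lemma suppS_mul_self (hA : A.PosSemidef) : suppS hA * A = A := by
  have key : specFun hA.1 suppf * specFun hA.1 (fun x => x) = specFun hA.1 (fun x => x) := by
    rw [specFun_mul]
    refine specFun_congr hA.1 fun i => ?_
    by_cases hx : hA.1.eigenvalues i = 0 <;> simp [suppf, hx]
  rw [specFun_id hA.1] at key
  exact key

lemma self_mul_suppS (hA : A.PosSemidef) : A * suppS hA = A := by
  have key : specFun hA.1 (fun x => x) * specFun hA.1 suppf = specFun hA.1 (fun x => x) := by
    rw [specFun_mul]
    refine specFun_congr hA.1 fun i => ?_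
    by_cases hx : hA.1.eigenvalues i = 0 <;> simp [suppf, hx]
  rw [specFun_id hA.1] at key
  exact key

lemma pinvS_mul_self_mul_pinvS (hA : A.PosSemidef) : pinvS hA * A * pinvS hA = suppS hA := by
  have key : specFun hA.1 gInv * specFun hA.1 (fun x => x) * specFun hA.1 gInv =
      specFun hA.1 suppf := by
    rw [specFun_mul, specFun_mul]
    refine specFun_congr hA.1 fun i => ?_
    have h0 := hA.eigenvalues_nonneg i
    set x := hA.1.eigenvalues i
    by_cases hx : x = 0
    · simp [gInv, suppf, hx]
    · have hs : Real.sqrt x ≠ 0 := by simpa [Real.sqrt_eq_zero h0] using hx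
      have hsq : Real.sqrt x * Real.sqrt x = x := Real.mul_self_sqrt h0
      simp only [gInv, suppf, if_neg hx]
      field_simp
      exact (Real.sq_sqrt h0).symm
  rw [specFun_id hA.1] at key
  exact key
lemma pinvS_mul_suppS (hA : A.PosSemidef) : pinvS hA * suppS hA = pinvS hA := by
  rw [pinvS, suppS, specFun_mul]
  refine specFun_congr hA.1 fun i => ?_
  by_cases hx : hA.1.eigenvalues i = 0 <;> simp [suppf, gInv, hx]

lemma pinvS_mul_A (hA : A.PosSemidef) : pinvS hA * A = hA.sqrt := by
  have key : specFun hA.1 gInv * specFun hA.1 (fun x => x) = specFun hA.1 Real.sqrt := by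
    rw [specFun_mul]
    refine specFun_congr hA.1 fun i => ?_
    have h0 := hA.eigenvalues_nonneg i
    set x := hA.1.eigenvalues i
    by_cases hx : x = 0
    · simp [gInv, hx]
    · have hsq : Real.sqrt x * Real.sqrt x = x := Real.mul_self_sqrt h0
      have hs : Real.sqrt x ≠ 0 := by simpa [Real.sqrt_eq_zero h0] using hx
      simp only [gInv, if_neg hx]
      field_simp
      exact (Real.sq_sqrt h0).symm
  rw [specFun_id hA.1] at key
  rw [pinvS, key, sqrt_eq_specFun hA]
lemma pinvS_mul_pinvS (hA : A.PosSemidef) : pinvS hA * pinvS hA = specFun hA.1 invf := by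
  rw [pinvS, specFun_mul]
  refine specFun_congr hA.1 fun i => ?_
  have h0 := hA.eigenvalues_nonneg i
  set x := hA.1.eigenvalues i
  by_cases hx : x = 0
  · simp [gInv, invf, hx]
  · have hsq : Real.sqrt x * Real.sqrt x = x := Real.mul_self_sqrt h0
    simp only [gInv, invf, if_neg hx]
    rw [← mul_inv, hsq]

lemma invf_mul_A_mul_invf (hA : A.PosSemidef) :
    specFun hA.1 invf * A * specFun hA.1 invf = specFun hA.1 invf := by
  have key : specFun hA.1 invf * specFun hA.1 (fun x => x) * specFun hA.1 invf =
      specFun hA.1 invf := by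
    rw [specFun_mul, specFun_mul]
    refine specFun_congr hA.1 fun i => ?_
    set x := hA.1.eigenvalues i
    by_cases hx : x = 0
    · simp [invf, hx]
    · simp only [invf, if_neg hx]
      field_simp
  rw [specFun_id hA.1] at key
  exact key
lemma one_sub_suppS_posSemidef (hA : A.PosSemidef) : (1 - suppS hA).PosSemidef := by
  have h1 : (1 : Matrix n n ℂ) = specFun hA.1 (fun _ => 1) := (specFun_one hA.1).symm
  rw [h1, suppS, ← specFun_sub]
  refine specFun_posSemidef hA.1 fun i => ?_
  by_cases hx : hA.1.eigenvalues i = 0 <;> simp [suppf, hx]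

lemma psd_trace_re_nonneg (hA : A.PosSemidef) : 0 ≤ A.trace.re := by
  conv_rhs => rw [← specFun_id hA.1]
  rw [specFun_trace]
  rw [Complex.re_sum]
  exact Finset.sum_nonneg fun i _ => by simpa using hA.eigenvalues_nonneg i

lemma psd_one_sub_of_proj {R : Matrix n n ℂ} (h1 : Rᴴ = R) (h2 : R * R = R) :
    (1 - R).PosSemidef := by
  have he : (1 - R)ᴴ * (1 - R) = 1 - R := by
    rw [conjTranspose_sub, conjTranspose_one, h1]
    simp [mul_sub, sub_mul, h2]
  rw [← he]
  exact posSemidef_conjTranspose_mul_self _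

end Stmt15Aux

namespace Stmt15Aux
open Matrix
open scoped ComplexOrder
variable {n : Type*} [Fintype n] [DecidableEq n]

lemma contraction_vec {T : Matrix n n ℂ} (hT : (1 - Tᴴ * T).PosSemidef) (u : n → ℂ) :
    (dotProduct (star (T *ᵥ u)) (T *ᵥ u)).re ≤ (dotProduct (star u) u).re := by
  have h0 := hT.re_dotProduct_nonneg u
  rw [Matrix.sub_mulVec, Matrix.one_mulVec, dotProduct_sub] at h0
  have hsw : dotProduct (star u) ((Tᴴ * T) *ᵥ u)
      = dotProduct (star (T *ᵥ u)) (T *ᵥ u) := by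
    rw [← Matrix.mulVec_mulVec, Matrix.star_mulVec, ← dotProduct_mulVec]
  rw [hsw] at h0
  simp only [map_sub, RCLike.re_to_complex] at h0
  linarith

lemma inner_equiv_symm_aux (u w : n → ℂ) :
    inner ℂ ((WithLp.equiv 2 (n → ℂ)).symm u) ((WithLp.equiv 2 (n → ℂ)).symm w)
      = dotProduct (star u) w := by
  rw [dotProduct_comm]; rfl

lemma cs_re_dot (u w : n → ℂ) :
    (dotProduct (star u) w).re ≤
      ‖(WithLp.equiv 2 (n → ℂ)).symm u‖ * ‖(WithLp.equiv 2 (n → ℂ)).symm w‖ := by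
  have h1 := norm_inner_le_norm (𝕜 := ℂ)
    ((WithLp.equiv 2 (n → ℂ)).symm u) ((WithLp.equiv 2 (n → ℂ)).symm w)
  rw [inner_equiv_symm_aux] at h1
  exact (Complex.re_le_norm _).trans h1

lemma norm_sq_eq_dot (u : n → ℂ) :
    ‖(WithLp.equiv 2 (n → ℂ)).symm u‖ ^ 2 = (dotProduct (star u) u).re := by
  have := inner_equiv_symm_aux u u
  have h2 : RCLike.re (inner ℂ ((WithLp.equiv 2 (n → ℂ)).symm u)
        ((WithLp.equiv 2 (n → ℂ)).symm u) : ℂ)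
      = ‖(WithLp.equiv 2 (n → ℂ)).symm u‖ ^ 2 := by
    rw [← inner_self_eq_norm_sq (𝕜 := ℂ)]
  rw [← h2, this, RCLike.re_to_complex]

/-- key contraction bound: `Re Tr (T P) ≤ Re Tr P` for `T` a contraction, `P` PSD. -/
lemma re_trace_mul_le_of_contraction {T P : Matrix n n ℂ}
    (hT : (1 - Tᴴ * T).PosSemidef) (hP : P.PosSemidef) :
    ((T * P).trace).re ≤ (P.trace).re := by
  set S := hP.sqrt with hSdef
  have hS : S * S = P := hP.sqrt_mul_self
  have hSh : Sᴴ = S := hP.posSemidef_sqrt.1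
  have htr : (T * P).trace = (S * (T * S)).trace := by
    rw [← hS, ← mul_assoc, trace_mul_comm]
  have hdiag : ∀ i, (S * (T * S)) i i
      = dotProduct (star (fun j => S j i)) (T *ᵥ (fun j => S j i)) := by
    intro i
    simp only [Matrix.mul_apply, dotProduct, Matrix.mulVec, Pi.star_apply]
    refine Finset.sum_congr rfl fun j _ => ?_
    have : S i j = star (S j i) := by
      conv_lhs => rw [← hSh]
      simp [Matrix.conjTranspose_apply]
    rw [this]
  have hbound : ∀ i, ((S * (T * S)) i i).re
      ≤ (dotProduct (star (fun j => S j i)) (fun j => S j i)).re := by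
    intro i
    set u : n → ℂ := fun j => S j i
    rw [hdiag i]
    have hcs := cs_re_dot u (T *ᵥ u)
    have hc := contraction_vec hT u
    have hn1 : ‖(WithLp.equiv 2 (n → ℂ)).symm (T *ᵥ u)‖ ≤ ‖(WithLp.equiv 2 (n → ℂ)).symm u‖ := by
      have e1 := norm_sq_eq_dot (T *ᵥ u)
      have e2 := norm_sq_eq_dot u
      nlinarith [norm_nonneg ((WithLp.equiv 2 (n → ℂ)).symm (T *ᵥ u)),
        norm_nonneg ((WithLp.equiv 2 (n → ℂ)).symm u)]
    have e2 := norm_sq_eq_dot u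
    nlinarith [norm_nonneg ((WithLp.equiv 2 (n → ℂ)).symm (T *ᵥ u)),
      norm_nonneg ((WithLp.equiv 2 (n → ℂ)).symm u), hcs]
  have hsum : ∀ i, (dotProduct (star (fun j => S j i)) (fun j => S j i)) = P i i := by
    intro i
    rw [← hS]
    simp only [Matrix.mul_apply, dotProduct, Pi.star_apply]
    refine Finset.sum_congr rfl fun j _ => ?_
    have : S i j = star (S j i) := by
      conv_lhs => rw [← hSh]
      simp [Matrix.conjTranspose_apply]
    rw [this]
  rw [htr, Matrix.trace, Matrix.trace, Complex.re_sum, Complex.re_sum]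
  refine Finset.sum_le_sum fun i _ => ?_
  calc ((S * (T * S)) i i).re ≤ _ := hbound i
  _ = (P i i).re := by rw [hsum i]
  _ = ((fun i => P i i) i).re := rfl

end Stmt15Aux

noncomputable section
namespace Stmt15Aux
open Matrix
open scoped ComplexOrder

variable {n : Type*} [Fintype n] [DecidableEq n]

set_option maxHeartbeats 1000000

lemma msqrt_eq {A : Matrix n n ℂ} (hA : A.PosSemidef) : msqrt A = hA.sqrt := dif_pos hA

lemma Fid_eq {ρ σ : Matrix n n ℂ} (hρ : ρ.PosSemidef) {M : Matrix n n ℂ}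
    (hM : M.PosSemidef) (heq : hρ.sqrt * σ * hρ.sqrt = M) :
    Fid ρ σ = (hM.sqrt.trace).re := by
  rw [Fid, msqrt_eq hρ, heq, msqrt_eq hM]

lemma Fid_nonneg {ρ σ : Matrix n n ℂ} : 0 ≤ Fid ρ σ := by
  rw [Fid]
  by_cases h : (msqrt ρ * σ * msqrt ρ).PosSemidef
  · rw [msqrt_eq h]
    exact psd_trace_re_nonneg h.posSemidef_sqrt
  · rw [msqrt, dif_neg h]
    simp

lemma sqrt_conj_posSemidef {ρ σ : Matrix n n ℂ} (hρ : ρ.PosSemidef) (hσ : σ.PosSemidef) :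
    (hρ.sqrt * σ * hρ.sqrt).PosSemidef := by
  have := hσ.mul_mul_conjTranspose_same hρ.sqrt
  rwa [hρ.posSemidef_sqrt.1] at this

lemma dot_sum_elim {m m' : Type*} [Fintype m] [Fintype m']
    (x : m ⊕ m' → ℂ) (p : m → ℂ) (q : m' → ℂ) :
    dotProduct (star x) (Sum.elim p q)
      = dotProduct (star (x ∘ Sum.inl)) p + dotProduct (star (x ∘ Sum.inr)) q := by
  simp [dotProduct, Fintype.sum_sum_type]

lemma posSemidef_fromBlocks_diag {m m' : Type*} [Fintype m] [Fintype m']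
    [DecidableEq m] [DecidableEq m'] {A : Matrix m m ℂ} {D : Matrix m' m' ℂ}
    (hA : A.PosSemidef) (hD : D.PosSemidef) :
    (Matrix.fromBlocks A 0 0 D).PosSemidef := by
  rw [Matrix.posSemidef_iff_dotProduct_mulVec]
  constructor
  · unfold Matrix.IsHermitian
    rw [Matrix.fromBlocks_conjTranspose]
    simp [hA.1.eq, hD.1.eq]
  · intro x
    rw [Matrix.fromBlocks_mulVec, dot_sum_elim]
    simp only [Matrix.zero_mulVec, add_zero, zero_add]
    exact add_nonneg (hA.dotProduct_mulVec_nonneg _) (hD.dotProduct_mulVec_nonneg _)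

/-- `C * suppS hM = C` whenever `Cᴴ * C = M`. -/
lemma mul_suppS_self {p m : Type*} [Fintype p] [Fintype m] [DecidableEq m]
    {C : Matrix p m ℂ} {M : Matrix m m ℂ} (hM : M.PosSemidef) (h : Cᴴ * C = M) :
    C * suppS hM = C := by
  have hs : (1 - suppS hM)ᴴ = 1 - suppS hM := by
    rw [conjTranspose_sub, conjTranspose_one, (suppS_isHermitian hM).eq]
  have key : (C * (1 - suppS hM))ᴴ * (C * (1 - suppS hM)) = 0 := by
    rw [conjTranspose_mul, hs]
    have e1 : (1 - suppS hM) * Cᴴ * (C * (1 - suppS hM))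
        = (1 - suppS hM) * (Cᴴ * C) * (1 - suppS hM) := by
      simp only [Matrix.mul_assoc]
    rw [e1, h]
    have e2 : (1 - suppS hM) * M = 0 := by
      rw [Matrix.sub_mul, Matrix.one_mul, suppS_mul_self hM, sub_self]
    rw [e2, Matrix.zero_mul]
  have h0 := Matrix.conjTranspose_mul_self_eq_zero.mp key
  rw [Matrix.mul_sub, Matrix.mul_one, sub_eq_zero] at h0
  exact h0.symm

lemma submatrix_conj_mul {p q a b : Type*} [Fintype p] [Fintype q]
    (C : Matrix p q ℂ) (f : a → q) (g : b → q) :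
    (C.submatrix id f)ᴴ * (C.submatrix id g) = (Cᴴ * C).submatrix f g := by
  ext i j
  simp [Matrix.mul_apply, Matrix.conjTranspose_apply, Matrix.submatrix_apply]

/-- Achievability core with abstract square roots. -/
lemma achiever_aux {m : Type*} [Fintype m] [DecidableEq m]
    (ρ σ P Q M : Matrix m m ℂ) (hM : M.PosSemidef)
    (hPh : Pᴴ = P) (hQh : Qᴴ = Q) (hPP : P * P = ρ) (hQQ : Q * Q = σ)
    (hMeq : P * σ * P = M) :
    ∃ X : Matrix m m ℂ, (Matrix.fromBlocks ρ X Xᴴ σ).PosSemidef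
      ∧ X.trace = hM.sqrt.trace := by
  have hAH : (Q * P)ᴴ = P * Q := by rw [conjTranspose_mul, hPh, hQh]
  have hAA : (Q * P)ᴴ * (Q * P) = M := by
    rw [hAH, ← hMeq, ← hQQ]
    simp only [Matrix.mul_assoc]
  set F := specFun hM.1 invf with hFdef
  have hFh : Fᴴ = F := (specFun_isHermitian hM.1 invf).eq
  set K := pinvS hM * (Q * P)ᴴ with hKdef
  have hKH : Kᴴ = (Q * P) * pinvS hM := by
    rw [hKdef, conjTranspose_mul, conjTranspose_conjTranspose, (pinvS_isHermitian hM).eq]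
  have hKK : Kᴴ * K = (Q * P) * F * (Q * P)ᴴ := by
    rw [hKH, hKdef, hFdef, ← pinvS_mul_pinvS hM]
    simp only [Matrix.mul_assoc]
  have hRherm : ((Q * P) * F * (Q * P)ᴴ)ᴴ = (Q * P) * F * (Q * P)ᴴ := by
    simp only [conjTranspose_mul, conjTranspose_conjTranspose, hFh, Matrix.mul_assoc]
  have hRidem : ((Q * P) * F * (Q * P)ᴴ) * ((Q * P) * F * (Q * P)ᴴ)
      = (Q * P) * F * (Q * P)ᴴ := by
    have e1 : ((Q * P) * F * (Q * P)ᴴ) * ((Q * P) * F * (Q * P)ᴴ)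
        = (Q * P) * (F * ((Q * P)ᴴ * (Q * P)) * F) * (Q * P)ᴴ := by
      simp only [Matrix.mul_assoc]
    rw [e1, hAA, hFdef, invf_mul_A_mul_invf hM]
  have hcontr : (1 - Kᴴ * K).PosSemidef := by
    rw [hKK]
    exact psd_one_sub_of_proj hRherm hRidem
  refine ⟨P * K * Q, ?_, ?_⟩
  · have hL : (Matrix.fromBlocks 1 K 0 0 : Matrix (m ⊕ m) (m ⊕ m) ℂ)ᴴ *
        (Matrix.fromBlocks 1 K 0 0) = Matrix.fromBlocks 1 K Kᴴ (Kᴴ * K) := by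
      rw [Matrix.fromBlocks_conjTranspose, Matrix.fromBlocks_multiply]
      simp
    have hG : (Matrix.fromBlocks 1 K Kᴴ 1 : Matrix (m ⊕ m) (m ⊕ m) ℂ).PosSemidef := by
      have hdec : (Matrix.fromBlocks 1 K Kᴴ 1 : Matrix (m ⊕ m) (m ⊕ m) ℂ)
          = (Matrix.fromBlocks 1 K 0 0)ᴴ * (Matrix.fromBlocks 1 K 0 0)
            + Matrix.fromBlocks 0 0 0 (1 - Kᴴ * K) := by
        rw [hL, Matrix.fromBlocks_add]
        simp
      rw [hdec]
      exact (Matrix.posSemidef_conjTranspose_mul_self _).add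
        (posSemidef_fromBlocks_diag Matrix.PosSemidef.zero hcontr)
    have hfinal : Matrix.fromBlocks ρ (P * K * Q) (P * K * Q)ᴴ σ
        = (Matrix.fromBlocks P 0 0 Q)ᴴ * (Matrix.fromBlocks 1 K Kᴴ 1) *
          (Matrix.fromBlocks P 0 0 Q) := by
      rw [Matrix.fromBlocks_conjTranspose, Matrix.fromBlocks_multiply,
        Matrix.fromBlocks_multiply]
      simp only [Matrix.conjTranspose_zero, hPh, hQh, Matrix.mul_zero, Matrix.zero_mul,
        Matrix.mul_one, add_zero, zero_add, Matrix.one_mul]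
      rw [hPP, hQQ]
      congr 1
      rw [conjTranspose_mul, conjTranspose_mul, hPh, hQh]
      simp only [Matrix.mul_assoc]
    rw [hfinal]
    exact hG.conjTranspose_mul_mul_same _
  · have e0 : (P * K * Q).trace = ((Q * P) * pinvS hM * (Q * P)ᴴ).trace := by
      rw [Matrix.trace_mul_cycle]
      congr 1
      rw [hKdef]
      simp only [Matrix.mul_assoc]
    have e1 : ((Q * P) * pinvS hM * (Q * P)ᴴ).trace = ((Q * P)ᴴ * (Q * P) * pinvS hM).trace :=
      Matrix.trace_mul_cycle (Q * P) (pinvS hM) ((Q * P)ᴴ)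
    rw [e0, e1, hAA]
    have e3 : M * pinvS hM = hM.sqrt := by
      have h1 := pinvS_mul_A hM
      have h2 : (pinvS hM * M)ᴴ = M * pinvS hM := by
        rw [conjTranspose_mul, (pinvS_isHermitian hM).eq, hM.1.eq]
      rw [← h2, h1, hM.posSemidef_sqrt.1.eq]
    rw [e3]

lemma exists_block_achiever {m : Type*} [Fintype m] [DecidableEq m]
    {ρ σ : Matrix m m ℂ} (hρ : ρ.PosSemidef) (hσ : σ.PosSemidef) :
    ∃ X : Matrix m m ℂ, (Matrix.fromBlocks ρ X Xᴴ σ).PosSemidef ∧ X.trace.re = Fid ρ σ := by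
  have hM : (hρ.sqrt * σ * hρ.sqrt).PosSemidef := sqrt_conj_posSemidef hρ hσ
  obtain ⟨X, hblk, htr⟩ := achiever_aux ρ σ hρ.sqrt hσ.sqrt _ hM
    hρ.posSemidef_sqrt.1.eq hσ.posSemidef_sqrt.1.eq hρ.sqrt_mul_self hσ.sqrt_mul_self rfl
  exact ⟨X, hblk, by rw [htr, Fid_eq hρ hM rfl]⟩

/-- Abstract three-factor contraction bound. -/
lemma contraction_triple {p m : Type*} [Fintype p] [Fintype m] [DecidableEq p] [DecidableEq m]
    (V1 V2 : Matrix p m ℂ) (W S : Matrix m m ℂ)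
    (h1 : (1 - V1 * V1ᴴ).PosSemidef) (h2 : (1 - V2ᴴ * V2).PosSemidef)
    (h3 : (1 - Wᴴ * W).PosSemidef) (hS : S.PosSemidef) :
    (((V1ᴴ * (V2 * W)) * S).trace).re ≤ (S.trace).re := by
  have hTcon : (1 - (V1ᴴ * (V2 * W))ᴴ * (V1ᴴ * (V2 * W))).PosSemidef := by
    have e1 : (V2 * W)ᴴ * (1 - V1 * V1ᴴ) * (V2 * W)
        = (V2 * W)ᴴ * (V2 * W) - (V1ᴴ * (V2 * W))ᴴ * (V1ᴴ * (V2 * W)) := by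
      rw [Matrix.mul_sub, Matrix.mul_one, Matrix.sub_mul]
      congr 1
      simp only [conjTranspose_mul, conjTranspose_conjTranspose, Matrix.mul_assoc]
    have e2 : Wᴴ * (1 - V2ᴴ * V2) * W = Wᴴ * W - (V2 * W)ᴴ * (V2 * W) := by
      rw [Matrix.mul_sub, Matrix.mul_one, Matrix.sub_mul]
      congr 1
      simp only [conjTranspose_mul, conjTranspose_conjTranspose, Matrix.mul_assoc]
    have hdecomp : 1 - (V1ᴴ * (V2 * W))ᴴ * (V1ᴴ * (V2 * W))
        = (V2 * W)ᴴ * (1 - V1 * V1ᴴ) * (V2 * W) + Wᴴ * (1 - V2ᴴ * V2) * W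
          + (1 - Wᴴ * W) := by
      rw [e1, e2]
      abel
    rw [hdecomp]
    exact ((h1.conjTranspose_mul_mul_same (V2 * W)).add
      (h2.conjTranspose_mul_mul_same W)).add h3
  exact re_trace_mul_le_of_contraction hTcon hS

/-- Converse core. -/
lemma re_trace_conj_le_Fid {p m : Type*} [Fintype p] [Fintype m] [DecidableEq p] [DecidableEq m]
    (C1 C2 : Matrix p m ℂ) :
    ((C1ᴴ * C2).trace).re ≤ Fid (C1ᴴ * C1) (C2ᴴ * C2) := by
  have hρ : (C1ᴴ * C1).PosSemidef := Matrix.posSemidef_conjTranspose_mul_self C1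
  have hσ : (C2ᴴ * C2).PosSemidef := Matrix.posSemidef_conjTranspose_mul_self C2
  have hPh : hρ.sqrtᴴ = hρ.sqrt := hρ.posSemidef_sqrt.1
  have hQh : hσ.sqrtᴴ = hσ.sqrt := hσ.posSemidef_sqrt.1
  have hPP : hρ.sqrt * hρ.sqrt = C1ᴴ * C1 := hρ.sqrt_mul_self
  have hQQ : hσ.sqrt * hσ.sqrt = C2ᴴ * C2 := hσ.sqrt_mul_self
  have hM : (hρ.sqrt * (C2ᴴ * C2) * hρ.sqrt).PosSemidef := sqrt_conj_posSemidef hρ hσ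
  have hAA : (hσ.sqrt * hρ.sqrt)ᴴ * (hσ.sqrt * hρ.sqrt) = hρ.sqrt * (C2ᴴ * C2) * hρ.sqrt := by
    rw [conjTranspose_mul, hPh, hQh]
    calc hρ.sqrt * hσ.sqrt * (hσ.sqrt * hρ.sqrt)
        = hρ.sqrt * (hσ.sqrt * hσ.sqrt) * hρ.sqrt := by simp only [Matrix.mul_assoc]
      _ = hρ.sqrt * (C2ᴴ * C2) * hρ.sqrt := by rw [hQQ]
  -- abbreviations (as plain terms)
  -- V1 := C1 * pinvS hρ, V2 := C2 * pinvS hσ, W := (Q*P) * pinvS hM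
  have hV1P : (C1 * pinvS hρ) * hρ.sqrt = C1 := by
    rw [Matrix.mul_assoc, pinvS_mul_sqrt hρ, mul_suppS_self hρ rfl]
  have hV2Q : (C2 * pinvS hσ) * hσ.sqrt = C2 := by
    rw [Matrix.mul_assoc, pinvS_mul_sqrt hσ, mul_suppS_self hσ rfl]
  have hWM : ((hσ.sqrt * hρ.sqrt) * pinvS hM) * hM.sqrt = hσ.sqrt * hρ.sqrt := by
    rw [Matrix.mul_assoc, pinvS_mul_sqrt hM, mul_suppS_self hM hAA]
  have hV1H : (C1 * pinvS hρ)ᴴ = pinvS hρ * C1ᴴ := by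
    rw [conjTranspose_mul, (pinvS_isHermitian hρ).eq]
  have hV2H : (C2 * pinvS hσ)ᴴ = pinvS hσ * C2ᴴ := by
    rw [conjTranspose_mul, (pinvS_isHermitian hσ).eq]
  have hWH : ((hσ.sqrt * hρ.sqrt) * pinvS hM)ᴴ = pinvS hM * (hσ.sqrt * hρ.sqrt)ᴴ := by
    rw [conjTranspose_mul, (pinvS_isHermitian hM).eq]
  have hV1V1 : (C1 * pinvS hρ)ᴴ * (C1 * pinvS hρ) = suppS hρ := by
    rw [hV1H]
    have e : pinvS hρ * C1ᴴ * (C1 * pinvS hρ) = pinvS hρ * (C1ᴴ * C1) * pinvS hρ := by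
      simp only [Matrix.mul_assoc]
    rw [e, pinvS_mul_self_mul_pinvS hρ]
  have hV2V2 : (C2 * pinvS hσ)ᴴ * (C2 * pinvS hσ) = suppS hσ := by
    rw [hV2H]
    have e : pinvS hσ * C2ᴴ * (C2 * pinvS hσ) = pinvS hσ * (C2ᴴ * C2) * pinvS hσ := by
      simp only [Matrix.mul_assoc]
    rw [e, pinvS_mul_self_mul_pinvS hσ]
  have hWW : ((hσ.sqrt * hρ.sqrt) * pinvS hM)ᴴ * ((hσ.sqrt * hρ.sqrt) * pinvS hM)
      = suppS hM := by
    rw [hWH]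
    have e : pinvS hM * (hσ.sqrt * hρ.sqrt)ᴴ * ((hσ.sqrt * hρ.sqrt) * pinvS hM)
        = pinvS hM * ((hσ.sqrt * hρ.sqrt)ᴴ * (hσ.sqrt * hρ.sqrt)) * pinvS hM := by
      simp only [Matrix.mul_assoc]
    rw [e, hAA, pinvS_mul_self_mul_pinvS hM]
  have hV1proj : (1 - (C1 * pinvS hρ) * (C1 * pinvS hρ)ᴴ).PosSemidef := by
    refine psd_one_sub_of_proj ?_ ?_
    · rw [conjTranspose_mul, conjTranspose_conjTranspose]
    · have e1 : (C1 * pinvS hρ) * (C1 * pinvS hρ)ᴴ * ((C1 * pinvS hρ) * (C1 * pinvS hρ)ᴴ)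
          = (C1 * pinvS hρ) * ((C1 * pinvS hρ)ᴴ * (C1 * pinvS hρ)) * (C1 * pinvS hρ)ᴴ := by
        simp only [Matrix.mul_assoc]
      rw [e1, hV1V1]
      have e2 : (C1 * pinvS hρ) * suppS hρ = C1 * pinvS hρ := by
        rw [Matrix.mul_assoc, pinvS_mul_suppS hρ]
      rw [e2]
  -- combine
  have hV2c : (1 - (C2 * pinvS hσ)ᴴ * (C2 * pinvS hσ)).PosSemidef := by
    rw [hV2V2]; exact one_sub_suppS_posSemidef hσ
  have hWc : (1 - ((hσ.sqrt * hρ.sqrt) * pinvS hM)ᴴ * ((hσ.sqrt * hρ.sqrt) * pinvS hM)).PosSemidef := by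
    rw [hWW]; exact one_sub_suppS_posSemidef hM
  have key := contraction_triple (C1 * pinvS hρ) (C2 * pinvS hσ)
    ((hσ.sqrt * hρ.sqrt) * pinvS hM) hM.sqrt hV1proj hV2c hWc hM.posSemidef_sqrt
  have htr : (((C1 * pinvS hρ)ᴴ * ((C2 * pinvS hσ) * ((hσ.sqrt * hρ.sqrt) * pinvS hM)))
      * hM.sqrt).trace = (C1ᴴ * C2).trace := by
    have e1 : ((C1 * pinvS hρ)ᴴ * ((C2 * pinvS hσ) * ((hσ.sqrt * hρ.sqrt) * pinvS hM)))
        * hM.sqrt = (C1 * pinvS hρ)ᴴ * (C2 * hρ.sqrt) := by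
      rw [Matrix.mul_assoc, Matrix.mul_assoc, hWM]
      congr 1
      rw [← Matrix.mul_assoc, hV2Q]
    rw [e1, ← Matrix.mul_assoc, Matrix.trace_mul_cycle]
    have e2 : hρ.sqrt * (C1 * pinvS hρ)ᴴ = C1ᴴ := by
      conv_lhs => rw [← hPh]
      rw [← conjTranspose_mul, hV1P]
    rw [e2]
  rw [← htr]
  calc ((((C1 * pinvS hρ)ᴴ * ((C2 * pinvS hσ) * ((hσ.sqrt * hρ.sqrt) * pinvS hM)))
        * hM.sqrt).trace).re
      ≤ (hM.sqrt.trace).re := key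
    _ = Fid (C1ᴴ * C1) (C2ᴴ * C2) := (Fid_eq hρ hM rfl).symm

/-- Converse, block form. -/
lemma block_psd_trace_le {m : Type*} [Fintype m] [DecidableEq m]
    {ρ σ X Y : Matrix m m ℂ} (hB : (Matrix.fromBlocks ρ X Y σ).PosSemidef) :
    X.trace.re ≤ Fid ρ σ := by
  have hCh : hB.sqrtᴴ = hB.sqrt := hB.posSemidef_sqrt.1
  have hCC : hB.sqrtᴴ * hB.sqrt = Matrix.fromBlocks ρ X Y σ := by
    rw [hCh, hB.sqrt_mul_self]
  set C := hB.sqrt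
  have h11 : (C.submatrix id Sum.inl)ᴴ * (C.submatrix id Sum.inl) = ρ := by
    rw [submatrix_conj_mul, hCC]
    ext i j
    simp [Matrix.submatrix_apply]
  have h22 : (C.submatrix id Sum.inr)ᴴ * (C.submatrix id Sum.inr) = σ := by
    rw [submatrix_conj_mul, hCC]
    ext i j
    simp [Matrix.submatrix_apply]
  have h12 : (C.submatrix id Sum.inl)ᴴ * (C.submatrix id Sum.inr) = X := by
    rw [submatrix_conj_mul, hCC]
    ext i j
    simp [Matrix.submatrix_apply]
  have key := re_trace_conj_le_Fid (C.submatrix id Sum.inl) (C.submatrix id Sum.inr)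
  rwa [h11, h22, h12] at key

lemma psd_sum {ι : Type*} (s : Finset ι) (f : ι → Matrix n n ℂ)
    (h : ∀ i ∈ s, (f i).PosSemidef) : (∑ i ∈ s, f i).PosSemidef :=
  Finset.sum_induction f _ (fun _ _ ha hb => ha.add hb) Matrix.PosSemidef.zero h

lemma trace_kraus {m m' : Type*} [Fintype m] [Fintype m'] [DecidableEq m] {N : ℕ}
    (G : Fin N → Matrix m' m ℂ) (hG : ∑ i, (G i)ᴴ * G i = 1) (X : Matrix m m ℂ) :
    (∑ i, G i * X * (G i)ᴴ).trace = X.trace := by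
  rw [Matrix.trace_sum]
  have heach : ∀ i, (G i * X * (G i)ᴴ).trace = ((G i)ᴴ * G i * X).trace := fun i =>
    Matrix.trace_mul_cycle (G i) X (G i)ᴴ
  rw [Finset.sum_congr rfl (fun i _ => heach i), ← Matrix.trace_sum,
    ← Finset.sum_mul, hG, Matrix.one_mul]

lemma fromBlocks_sum {ι m m' : Type*} (s : Finset ι)
    (f : ι → Matrix m m ℂ) (g : ι → Matrix m m' ℂ) (h : ι → Matrix m' m ℂ)
    (l : ι → Matrix m' m' ℂ) :
    Matrix.fromBlocks (∑ i ∈ s, f i) (∑ i ∈ s, g i) (∑ i ∈ s, h i) (∑ i ∈ s, l i)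
      = ∑ i ∈ s, Matrix.fromBlocks (f i) (g i) (h i) (l i) := by
  ext (a | a) (b | b) <;> simp [Matrix.sum_apply]

/-- Data-processing inequality for fidelity, for Kraus channels. -/
lemma fid_dpi {m m' : Type*} [Fintype m] [DecidableEq m] [Fintype m'] [DecidableEq m']
    {ρ σ : Matrix m m ℂ} (hρ : ρ.PosSemidef) (hσ : σ.PosSemidef) {N : ℕ}
    (G : Fin N → Matrix m' m ℂ) (hG : ∑ i, (G i)ᴴ * G i = 1) :
    Fid ρ σ ≤ Fid (∑ i, G i * ρ * (G i)ᴴ) (∑ i, G i * σ * (G i)ᴴ) := by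
  obtain ⟨X, hblk, htr⟩ := exists_block_achiever hρ hσ
  have heach : ∀ i : Fin N, (Matrix.fromBlocks (G i) 0 0 (G i)) * (Matrix.fromBlocks ρ X Xᴴ σ)
      * (Matrix.fromBlocks (G i) 0 0 (G i))ᴴ
      = Matrix.fromBlocks (G i * ρ * (G i)ᴴ) (G i * X * (G i)ᴴ)
        (G i * Xᴴ * (G i)ᴴ) (G i * σ * (G i)ᴴ) := by
    intro i
    rw [Matrix.fromBlocks_conjTranspose, Matrix.fromBlocks_multiply, Matrix.fromBlocks_multiply]
    simp
  have hbig : (Matrix.fromBlocks (∑ i, G i * ρ * (G i)ᴴ) (∑ i, G i * X * (G i)ᴴ)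
      (∑ i, G i * Xᴴ * (G i)ᴴ) (∑ i, G i * σ * (G i)ᴴ)).PosSemidef := by
    rw [fromBlocks_sum]
    refine psd_sum _ _ fun i _ => ?_
    rw [← heach i]
    exact hblk.mul_mul_conjTranspose_same _
  have hle := block_psd_trace_le hbig
  have htr2 : (∑ i, G i * X * (G i)ᴴ).trace = X.trace := trace_kraus G hG X
  rw [htr2] at hle
  rw [← htr]
  exact hle

end Stmt15Aux
end
noncomputable section
namespace Stmt15Aux
open Matrix
open scoped Kronecker ComplexOrder

set_option maxHeartbeats 1000000

lemma kron_conjTranspose {m m' n n' : Type*}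
    (A : Matrix m m' ℂ) (B : Matrix n n' ℂ) : (A ⊗ₖ B)ᴴ = Aᴴ ⊗ₖ Bᴴ := by
  ext ⟨i, j⟩ ⟨i', j'⟩
  simp [Matrix.conjTranspose_apply, Matrix.kroneckerMap_apply, star_mul']

lemma sum_kronecker_left {ι m m' n n' : Type*} [Fintype m'] (s : Finset ι)
    (f : ι → Matrix m m' ℂ) (B : Matrix n n' ℂ) :
    (∑ i ∈ s, f i) ⊗ₖ B = ∑ i ∈ s, (f i ⊗ₖ B) := by
  ext ⟨a, b⟩ ⟨c, d⟩
  simp [Matrix.kroneckerMap_apply, Matrix.sum_apply, Finset.sum_mul]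

lemma sum_kronecker_right {ι m m' n n' : Type*} [Fintype m'] (s : Finset ι)
    (B : Matrix m m' ℂ) (f : ι → Matrix n n' ℂ) :
    B ⊗ₖ (∑ i ∈ s, f i) = ∑ i ∈ s, (B ⊗ₖ f i) := by
  ext ⟨a, b⟩ ⟨c, d⟩
  simp [Matrix.kroneckerMap_apply, Matrix.sum_apply, Finset.mul_sum]

/-- Kraus form of `tensorId`. -/
lemma tensorId_kraus {dA dA' dB : ℕ}
    (Γ : Matrix (Fin dA) (Fin dA) ℂ →ₗ[ℂ] Matrix (Fin dA') (Fin dA') ℂ)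
    {N : ℕ} (K : Fin N → Matrix (Fin dA') (Fin dA) ℂ)
    (hK : ∀ X, Γ X = ∑ i, K i * X * (K i)ᴴ)
    (ρ : Matrix (Fin dA × Fin dB) (Fin dA × Fin dB) ℂ) :
    tensorId Γ ρ = ∑ i, (K i ⊗ₖ (1 : Matrix (Fin dB) (Fin dB) ℂ)) * ρ *
      ((K i ⊗ₖ (1 : Matrix (Fin dB) (Fin dB) ℂ)))ᴴ := by
  ext p q
  rw [tensorId, Matrix.of_apply, hK, Matrix.sum_apply, Matrix.sum_apply]
  refine Finset.sum_congr rfl fun i _ => ?_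
  simp only [Matrix.mul_apply, Matrix.kroneckerMap_apply, Matrix.conjTranspose_apply,
    Matrix.of_apply, Matrix.one_apply, Fintype.sum_prod_type, apply_ite (star : ℂ → ℂ),
    star_one, star_zero, mul_ite, ite_mul, mul_zero, zero_mul, mul_one, one_mul,
    Finset.sum_ite_eq, Finset.sum_ite_eq', Finset.mem_univ, if_true,
    Finset.sum_mul, Finset.mul_sum]

/-- Kraus form of `idTensor`. -/
lemma idTensor_kraus {dA dB dB' : ℕ}
    (Λ : Matrix (Fin dB) (Fin dB) ℂ →ₗ[ℂ] Matrix (Fin dB') (Fin dB') ℂ)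
    {N : ℕ} (C : Fin N → Matrix (Fin dB') (Fin dB) ℂ)
    (hC : ∀ X, Λ X = ∑ i, C i * X * (C i)ᴴ)
    (ρ : Matrix (Fin dA × Fin dB) (Fin dA × Fin dB) ℂ) :
    idTensor Λ ρ = ∑ i, ((1 : Matrix (Fin dA) (Fin dA) ℂ) ⊗ₖ C i) * ρ *
      (((1 : Matrix (Fin dA) (Fin dA) ℂ) ⊗ₖ C i))ᴴ := by
  ext p q
  rw [idTensor, Matrix.of_apply, hC, Matrix.sum_apply, Matrix.sum_apply]
  refine Finset.sum_congr rfl fun i _ => ?_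
  simp only [Matrix.mul_apply, Matrix.kroneckerMap_apply, Matrix.conjTranspose_apply,
    Matrix.of_apply, Matrix.one_apply, Fintype.sum_prod_type, apply_ite (star : ℂ → ℂ),
    star_one, star_zero, mul_ite, ite_mul, mul_zero, zero_mul, mul_one, one_mul,
    Finset.sum_ite_eq, Finset.sum_ite_eq', Finset.mem_univ, if_true,
    Finset.sum_mul, Finset.mul_sum]
  conv_rhs => rw [Finset.sum_comm]
  simp only [Finset.sum_ite_irrel, Finset.sum_const_zero, Finset.sum_ite_eq, Finset.mem_univ,
    if_true]

end Stmt15Aux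
end

noncomputable section
namespace Stmt15Aux
open Matrix
open scoped Kronecker ComplexOrder

set_option maxHeartbeats 1000000

/-- The isometry-like maps implementing the partial trace. -/
def ptrKraus (d k : ℕ) (h : {i : Fin k // (i : ℕ) ≠ 0} → Fin d) :
    Matrix (Fin d) (Fin k → Fin d) ℂ :=
  Matrix.of fun a f => if f = extendFirst a h then 1 else 0

lemma ptrRest_eq {d k : ℕ} (W : Matrix (Fin k → Fin d) (Fin k → Fin d) ℂ) :
    ptrRest W = ∑ h, ptrKraus d k h * W * (ptrKraus d k h)ᴴ := by
  ext a a'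
  rw [ptrRest, Matrix.of_apply, Matrix.sum_apply]
  refine Finset.sum_congr rfl fun h _ => ?_
  rw [Matrix.mul_apply]
  simp only [Matrix.mul_apply, ptrKraus, Matrix.of_apply, Matrix.conjTranspose_apply,
    apply_ite (star : ℂ → ℂ), star_one, star_zero, mul_ite, ite_mul, mul_zero, zero_mul,
    mul_one, one_mul, Finset.sum_ite_eq, Finset.sum_ite_eq', Finset.mem_univ, if_true]

/-- The extension equivalence, for `k ≥ 1`. -/
def extEquiv (d k : ℕ) (hk : 1 ≤ k) :
    (Fin d × ({i : Fin k // (i : ℕ) ≠ 0} → Fin d)) ≃ (Fin k → Fin d) where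
  toFun x := extendFirst x.1 x.2
  invFun f := (f ⟨0, hk⟩, fun s => f s.1)
  left_inv := by
    rintro ⟨a, h⟩
    refine Prod.ext ?_ ?_
    · show extendFirst a h ⟨0, hk⟩ = a
      simp [extendFirst]
    · show (fun s => extendFirst a h s.1) = h
      funext s
      simp [extendFirst, s.2]
  right_inv f := by
    funext i
    by_cases hi : (i : ℕ) = 0
    · simp only [extendFirst, dif_pos hi]
      congr 1
      exact Fin.ext hi.symm
    · simp [extendFirst, hi]

lemma ptrKraus_complete {d k : ℕ} (hk : 1 ≤ k) :
    ∑ h, (ptrKraus d k h)ᴴ * ptrKraus d k h = 1 := by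
  ext f g
  rw [Matrix.sum_apply]
  have heach : ∀ h, ((ptrKraus d k h)ᴴ * ptrKraus d k h) f g
      = ∑ a, (if f = extendFirst a h then 1 else 0) * (if g = extendFirst a h then 1 else 0) := by
    intro h
    rw [Matrix.mul_apply]
    refine Finset.sum_congr rfl fun a _ => ?_
    simp [ptrKraus, Matrix.conjTranspose_apply, apply_ite (star : ℂ → ℂ)]
  rw [Finset.sum_congr rfl fun h _ => heach h, Finset.sum_comm]
  have hcoe : ∀ p : Fin d × ({i : Fin k // (i : ℕ) ≠ 0} → Fin d),
      (extEquiv d k hk) p = extendFirst p.1 p.2 := fun _ => rfl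
  have key := Equiv.sum_comp (extEquiv d k hk)
    (fun u => (if f = u then (1 : ℂ) else 0) * (if g = u then 1 else 0))
  simp only [hcoe, Fintype.sum_prod_type] at key
  rw [key]
  simp [Matrix.one_apply, Finset.sum_ite_eq, mul_ite, ite_mul, mul_one, mul_zero, eq_comm]

/-- Bose-symmetric extendible channels are quantum channels (for `k ≥ 1`). -/
lemma bse_channel {d k : ℕ} (hk : 1 ≤ k)
    {Λ : Matrix (Fin d) (Fin d) ℂ →ₗ[ℂ] Matrix (Fin d) (Fin d) ℂ}
    (h : IsBoseSymExtendible d k Λ) : IsQuantumChannel Λ := by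
  obtain ⟨V, ⟨N, J, hJ, hJsum⟩, _, hΛeq⟩ := h
  set H := ({i : Fin k // (i : ℕ) ≠ 0} → Fin d)
  have key : ∀ X, Λ X = ∑ p : H × Fin N,
      (ptrKraus d k p.1 * J p.2) * X * (ptrKraus d k p.1 * J p.2)ᴴ := by
    intro X
    rw [hΛeq, ptrRest_eq, Fintype.sum_prod_type]
    refine Finset.sum_congr rfl fun h _ => ?_
    rw [hJ]
    rw [Matrix.mul_sum, Matrix.sum_mul]
    refine Finset.sum_congr rfl fun i _ => ?_
    rw [Matrix.conjTranspose_mul]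
    simp only [Matrix.mul_assoc]
  have keysum : ∑ p : H × Fin N,
      (ptrKraus d k p.1 * J p.2)ᴴ * (ptrKraus d k p.1 * J p.2) = 1 := by
    rw [Fintype.sum_prod_type, Finset.sum_comm]
    have : ∀ i : Fin N, ∑ h : H, (ptrKraus d k h * J i)ᴴ * (ptrKraus d k h * J i)
        = (J i)ᴴ * J i := by
      intro i
      have e : ∀ h : H, (ptrKraus d k h * J i)ᴴ * (ptrKraus d k h * J i)
          = (J i)ᴴ * ((ptrKraus d k h)ᴴ * ptrKraus d k h) * J i := by
        intro h
        rw [Matrix.conjTranspose_mul]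
        simp only [Matrix.mul_assoc]
      rw [Finset.sum_congr rfl fun h _ => e h, ← Matrix.sum_mul, ← Matrix.mul_sum,
        ptrKraus_complete hk, Matrix.mul_one]
    rw [Finset.sum_congr rfl fun i _ => this i, hJsum]
  -- reindex by Fin
  refine ⟨Fintype.card (H × Fin N), fun j => ptrKraus d k ((Fintype.equivFin (H × Fin N)).symm j).1
    * J ((Fintype.equivFin (H × Fin N)).symm j).2, fun X => ?_, ?_⟩
  · rw [key X]
    exact (Equiv.sum_comp ((Fintype.equivFin (H × Fin N)).symm)
      (fun p => (ptrKraus d k p.1 * J p.2) * X * (ptrKraus d k p.1 * J p.2)ᴴ)).symm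
  · rw [← keysum]
    exact Equiv.sum_comp ((Fintype.equivFin (H × Fin N)).symm)
      (fun p => (ptrKraus d k p.1 * J p.2)ᴴ * (ptrKraus d k p.1 * J p.2))

end Stmt15Aux
end

noncomputable section
namespace Stmt15Aux
open Matrix
open scoped Kronecker ComplexOrder

set_option maxHeartbeats 1000000

variable {n : Type*} [Fintype n] [DecidableEq n]

lemma linmap_entry_sum {m m' : Type*} [Fintype m] [DecidableEq m] [Fintype m'] [DecidableEq m']
    (Φ : Matrix m m ℂ →ₗ[ℂ] Matrix m' m' ℂ) (c : m → m → ℂ) (i' j' : m') :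
    Φ (Matrix.of c) i' j' = ∑ i, ∑ j, c i j * Φ (Matrix.single i j 1) i' j' := by
  have hdec : (Matrix.of c : Matrix m m ℂ) = ∑ i, ∑ j, c i j • Matrix.single i j 1 := by
    conv_lhs => rw [Matrix.matrix_eq_sum_single (Matrix.of c)]
    refine Finset.sum_congr rfl fun i _ => Finset.sum_congr rfl fun j _ => ?_
    rw [Matrix.smul_single, smul_eq_mul, mul_one]
    rfl
  rw [hdec, map_sum, Matrix.sum_apply]
  refine Finset.sum_congr rfl fun i _ => ?_
  rw [map_sum, Matrix.sum_apply]
  refine Finset.sum_congr rfl fun j _ => ?_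
  rw [LinearMap.map_smul, Matrix.smul_apply, smul_eq_mul]

/-- `(Γ ⊗ id)` and `(id ⊗ Λ)` commute. -/
lemma tensorId_idTensor_comm {dA dA' dB dB' : ℕ}
    (Γ : Matrix (Fin dA) (Fin dA) ℂ →ₗ[ℂ] Matrix (Fin dA') (Fin dA') ℂ)
    (Λ : Matrix (Fin dB) (Fin dB) ℂ →ₗ[ℂ] Matrix (Fin dB') (Fin dB') ℂ)
    (ρ : Matrix (Fin dA × Fin dB) (Fin dA × Fin dB) ℂ) :
    tensorId Γ (idTensor Λ ρ) = idTensor Λ (tensorId Γ ρ) := by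
  ext p q
  rw [show tensorId Γ (idTensor Λ ρ) p q
      = Γ (Matrix.of fun a a' => idTensor Λ ρ (a, p.2) (a', q.2)) p.1 q.1 from rfl]
  rw [show idTensor Λ (tensorId Γ ρ) p q
      = Λ (Matrix.of fun b b' => tensorId Γ ρ (p.1, b) (q.1, b')) p.2 q.2 from rfl]
  rw [linmap_entry_sum Λ (fun b b' => tensorId Γ ρ (p.1, b) (q.1, b')) p.2 q.2]
  have hexp : (Matrix.of fun a a' => idTensor Λ ρ (a, p.2) (a', q.2))
      = ∑ b, ∑ b', (Λ (Matrix.single b b' 1) p.2 q.2) •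
        (Matrix.of fun a a' => ρ (a, b) (a', b')) := by
    ext a a'
    rw [Matrix.of_apply]
    rw [show idTensor Λ ρ (a, p.2) (a', q.2)
        = Λ (Matrix.of fun b b' => ρ (a, b) (a', b')) p.2 q.2 from rfl]
    rw [linmap_entry_sum Λ (fun b b' => ρ (a, b) (a', b')) p.2 q.2]
    rw [Matrix.sum_apply]
    refine Finset.sum_congr rfl fun b _ => ?_
    rw [Matrix.sum_apply]
    refine Finset.sum_congr rfl fun b' _ => ?_
    rw [Matrix.smul_apply, smul_eq_mul, Matrix.of_apply, mul_comm]
  rw [hexp, map_sum, Matrix.sum_apply]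
  refine Finset.sum_congr rfl fun b _ => ?_
  rw [map_sum, Matrix.sum_apply]
  refine Finset.sum_congr rfl fun b' _ => ?_
  rw [LinearMap.map_smul, Matrix.smul_apply, smul_eq_mul]
  rw [show tensorId Γ ρ (p.1, b) (q.1, b')
    = Γ (Matrix.of fun a a' => ρ (a, b) (a', b')) p.1 q.1 from rfl]
  ring

lemma specFun_const {A : Matrix n n ℂ} (hA : A.IsHermitian) (c : ℝ) :
    specFun hA (fun _ => c) = (c : ℂ) • 1 := by
  unfold specFun
  rw [show Matrix.diagonal (fun _ : n => (c : ℂ)) = (c : ℂ) • 1 from by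
    rw [Matrix.smul_one_eq_diagonal]]
  rw [Matrix.mul_smul, Matrix.mul_one, Matrix.smul_mul, mul_star_self_eigen hA]

lemma trace_re_eq_sum_eigen {A : Matrix n n ℂ} (hA : A.PosSemidef) :
    A.trace.re = ∑ i, hA.1.eigenvalues i := by
  conv_lhs => rw [← specFun_id hA.1]
  rw [specFun_trace, Complex.re_sum]
  simp

lemma smul_one_sub_posSemidef {A : Matrix n n ℂ} (hA : A.PosSemidef) :
    (((A.trace.re : ℝ) : ℂ) • 1 - A).PosSemidef := by
  have h1 : ((A.trace.re : ℝ) : ℂ) • (1 : Matrix n n ℂ) - A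
      = specFun hA.1 (fun x => A.trace.re - x) := by
    rw [specFun_sub hA.1, specFun_const hA.1, specFun_id hA.1]
  rw [h1]
  refine specFun_posSemidef hA.1 fun i => ?_
  rw [trace_re_eq_sum_eigen hA]
  have := Finset.single_le_sum (f := fun j => hA.1.eigenvalues j)
    (fun j _ => hA.eigenvalues_nonneg j) (Finset.mem_univ i)
  linarith

lemma trace_mul_re_le {ρ σ : Matrix n n ℂ} (hρ : ρ.PosSemidef) (hσ : σ.PosSemidef) :
    ((ρ * σ).trace).re ≤ ρ.trace.re * σ.trace.re := by
  have h1 : (ρ * σ).trace = (hσ.sqrt * ρ * hσ.sqrt).trace := by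
    rw [Matrix.trace_mul_cycle, hσ.sqrt_mul_self, Matrix.trace_mul_comm]
  have hdiff : (hσ.sqrt * (((ρ.trace.re : ℝ) : ℂ) • 1 - ρ) * hσ.sqrt).PosSemidef := by
    have h0 := (smul_one_sub_posSemidef hρ).mul_mul_conjTranspose_same hσ.sqrt
    rwa [hσ.posSemidef_sqrt.1.eq] at h0
  have h2 : hσ.sqrt * (((ρ.trace.re : ℝ) : ℂ) • 1 - ρ) * hσ.sqrt
      = ((ρ.trace.re : ℝ) : ℂ) • σ - hσ.sqrt * ρ * hσ.sqrt := by
    rw [Matrix.mul_sub, Matrix.sub_mul, Matrix.mul_smul, Matrix.mul_one, Matrix.smul_mul,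
      hσ.sqrt_mul_self]
  have h3 := psd_trace_re_nonneg hdiff
  rw [h2, Matrix.trace_sub, Matrix.trace_smul] at h3
  have h4 : ((((ρ.trace.re : ℝ) : ℂ) • σ.trace) - (hσ.sqrt * ρ * hσ.sqrt).trace).re
      = ρ.trace.re * σ.trace.re - ((hσ.sqrt * ρ * hσ.sqrt).trace).re := by
    rw [Complex.sub_re]
    congr 1
    rw [smul_eq_mul]
    simp [Complex.mul_re]
  rw [h4] at h3
  rw [h1]
  linarith

/-- Fidelity of two density matrices is bounded by `card + 1`. -/
lemma Fid_le_bound {ρ σ : Matrix n n ℂ} (hρ : ρ.PosSemidef) (hσ : σ.PosSemidef)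
    (hρt : ρ.trace = 1) (hσt : σ.trace = 1) :
    Fid ρ σ ≤ (Fintype.card n : ℝ) + 1 := by
  have hM : (hρ.sqrt * σ * hρ.sqrt).PosSemidef := sqrt_conj_posSemidef hρ hσ
  rw [Fid_eq hρ hM rfl]
  have h1 : (hM.sqrt.trace).re = ∑ i, Real.sqrt (hM.1.eigenvalues i) := by
    rw [sqrt_eq_specFun hM, specFun_trace, Complex.re_sum]
    simp
  have h2 : ∀ i, Real.sqrt (hM.1.eigenvalues i) ≤ 1 + hM.1.eigenvalues i := by
    intro i
    have h0 := hM.eigenvalues_nonneg i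
    nlinarith [Real.sq_sqrt h0, Real.sqrt_nonneg (hM.1.eigenvalues i),
      sq_nonneg (Real.sqrt (hM.1.eigenvalues i) - 1)]
  have h3 : (hM.sqrt.trace).re ≤ (Fintype.card n : ℝ) + (hρ.sqrt * σ * hρ.sqrt).trace.re := by
    rw [h1, trace_re_eq_sum_eigen hM]
    calc ∑ i, Real.sqrt (hM.1.eigenvalues i) ≤ ∑ i, (1 + hM.1.eigenvalues i) :=
          Finset.sum_le_sum fun i _ => h2 i
      _ = (Fintype.card n : ℝ) + ∑ i, hM.1.eigenvalues i := by
          rw [Finset.sum_add_distrib]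
          simp [Finset.card_univ]
  have h5 : (hρ.sqrt * σ * hρ.sqrt).trace = (ρ * σ).trace := by
    rw [Matrix.trace_mul_cycle, hρ.sqrt_mul_self]
  have h6 := trace_mul_re_le hρ hσ
  rw [hρt, hσt] at h6
  simp only [Complex.one_re, mul_one] at h6
  rw [h5] at h3
  linarith

end Stmt15Aux
end

noncomputable section
namespace Stmt15Aux
open Matrix
open scoped Kronecker ComplexOrder

set_option maxHeartbeats 1000000

lemma one_kron_kraus_sum {dA dB dB' : ℕ} {N : ℕ} (C : Fin N → Matrix (Fin dB') (Fin dB) ℂ)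
    (h : ∑ i, (C i)ᴴ * C i = 1) :
    ∑ i, (((1 : Matrix (Fin dA) (Fin dA) ℂ) ⊗ₖ C i))ᴴ *
      ((1 : Matrix (Fin dA) (Fin dA) ℂ) ⊗ₖ C i) = 1 := by
  have heach : ∀ i, (((1 : Matrix (Fin dA) (Fin dA) ℂ) ⊗ₖ C i))ᴴ *
      ((1 : Matrix (Fin dA) (Fin dA) ℂ) ⊗ₖ C i)
      = (1 : Matrix (Fin dA) (Fin dA) ℂ) ⊗ₖ ((C i)ᴴ * C i) := by
    intro i
    rw [kron_conjTranspose, ← Matrix.mul_kronecker_mul, Matrix.conjTranspose_one, Matrix.one_mul]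
  rw [Finset.sum_congr rfl fun i _ => heach i, ← sum_kronecker_right, h,
    Matrix.one_kronecker_one]

lemma kron_one_kraus_sum {dA dA' dB : ℕ} {N : ℕ} (K : Fin N → Matrix (Fin dA') (Fin dA) ℂ)
    (h : ∑ i, (K i)ᴴ * K i = 1) :
    ∑ i, ((K i ⊗ₖ (1 : Matrix (Fin dB) (Fin dB) ℂ)))ᴴ *
      (K i ⊗ₖ (1 : Matrix (Fin dB) (Fin dB) ℂ)) = 1 := by
  have heach : ∀ i, ((K i ⊗ₖ (1 : Matrix (Fin dB) (Fin dB) ℂ)))ᴴ *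
      (K i ⊗ₖ (1 : Matrix (Fin dB) (Fin dB) ℂ))
      = ((K i)ᴴ * K i) ⊗ₖ (1 : Matrix (Fin dB) (Fin dB) ℂ) := by
    intro i
    rw [kron_conjTranspose, ← Matrix.mul_kronecker_mul, Matrix.conjTranspose_one, Matrix.one_mul]
  rw [Finset.sum_congr rfl fun i _ => heach i, ← sum_kronecker_left, h,
    Matrix.one_kronecker_one]

/-- outputs of Kraus channels are PSD with preserved trace. -/
lemma kraus_out_psd {m m' : Type*} [Fintype m] [Fintype m'] [DecidableEq m']
    {N : ℕ} (G : Fin N → Matrix m' m ℂ) {ρ : Matrix m m ℂ} (hρ : ρ.PosSemidef) :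
    (∑ i, G i * ρ * (G i)ᴴ).PosSemidef :=
  psd_sum _ _ fun i _ => hρ.mul_mul_conjTranspose_same _

end Stmt15Aux
end

/-- The supremum of fidelities over k-Bose-symmetric extendible channels is
monotonically non-decreasing under local quantum channels on A. -/
theorem stmt15 {dA dA' dB k : ℕ} (hk : 1 ≤ k)
    (ρ : Matrix (Fin dA × Fin dB) (Fin dA × Fin dB) ℂ) (hρ : IsDensityMatrix ρ)
    (Γ : Matrix (Fin dA) (Fin dA) ℂ →ₗ[ℂ] Matrix (Fin dA') (Fin dA') ℂ)
    (hΓ : IsQuantumChannel Γ) :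
    symSup dA dB k ρ ≤ symSup dA' dB k (tensorId Γ ρ) := by
  classical
  open Stmt15Aux in
  obtain ⟨hρpsd, hρtr⟩ := hρ
  obtain ⟨NΓ, K, hK, hKsum⟩ := hΓ
  have hGsum := Stmt15Aux.kron_one_kraus_sum (dB := dB) K hKsum
  have hTid : ∀ ψ : Matrix (Fin dA × Fin dB) (Fin dA × Fin dB) ℂ,
      tensorId Γ ψ = ∑ i, (K i ⊗ₖ (1 : Matrix (Fin dB) (Fin dB) ℂ)) * ψ *
        ((K i ⊗ₖ (1 : Matrix (Fin dB) (Fin dB) ℂ)))ᴴ :=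
    fun ψ => Stmt15Aux.tensorId_kraus Γ K hK ψ
  have hρ'psd : (tensorId Γ ρ).PosSemidef := by
    rw [hTid]
    exact Stmt15Aux.kraus_out_psd _ hρpsd
  have hρ'tr : (tensorId Γ ρ).trace = 1 := by
    rw [hTid, Stmt15Aux.trace_kraus _ hGsum, hρtr]
  -- facts about idTensor of a channel output
  have hσfacts : ∀ (Λ : Matrix (Fin dB) (Fin dB) ℂ →ₗ[ℂ] Matrix (Fin dB) (Fin dB) ℂ),
      IsBoseSymExtendible dB k Λ →
      ∀ (ψ : Matrix (Fin dA' × Fin dB) (Fin dA' × Fin dB) ℂ), ψ.PosSemidef → ψ.trace = 1 →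
      (idTensor Λ ψ).PosSemidef ∧ (idTensor Λ ψ).trace = 1 := by
    intro Λ hΛ ψ hψ hψtr
    obtain ⟨NΛ, C, hC, hCsum⟩ := Stmt15Aux.bse_channel hk hΛ
    have hIT := Stmt15Aux.idTensor_kraus (dA := dA') Λ C hC ψ
    have hsum2 := Stmt15Aux.one_kron_kraus_sum (dA := dA') C hCsum
    constructor
    · rw [hIT]; exact Stmt15Aux.kraus_out_psd _ hψ
    · rw [hIT, Stmt15Aux.trace_kraus _ hsum2, hψtr]
  have hbdd : BddAbove {x : ℝ | ∃ Λ, IsBoseSymExtendible dB k Λ ∧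
      x = Fid (tensorId Γ ρ) (idTensor Λ (tensorId Γ ρ))} := by
    refine ⟨(Fintype.card (Fin dA' × Fin dB) : ℝ) + 1, fun x hx => ?_⟩
    obtain ⟨Λ, hΛ, rfl⟩ := hx
    obtain ⟨hσpsd, hσtr⟩ := hσfacts Λ hΛ (tensorId Γ ρ) hρ'psd hρ'tr
    exact Stmt15Aux.Fid_le_bound hρ'psd hσpsd hρ'tr hσtr
  rw [symSup, symSup]
  refine Real.sSup_le (fun x hx => ?_) ?_
  · obtain ⟨Λ, hΛ, rfl⟩ := hx
    -- σ := idTensor Λ ρ is PSD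
    have hσpsd : (idTensor Λ ρ).PosSemidef := by
      obtain ⟨NΛ, C, hC, hCsum⟩ := Stmt15Aux.bse_channel hk hΛ
      rw [Stmt15Aux.idTensor_kraus (dA := dA) Λ C hC ρ]
      exact Stmt15Aux.kraus_out_psd _ hρpsd
    have hdpi := Stmt15Aux.fid_dpi hρpsd hσpsd
      (fun i => K i ⊗ₖ (1 : Matrix (Fin dB) (Fin dB) ℂ)) hGsum
    rw [← hTid ρ, ← hTid (idTensor Λ ρ)] at hdpi
    rw [Stmt15Aux.tensorId_idTensor_comm Γ Λ ρ] at hdpi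
    refine le_trans hdpi (le_csSup hbdd ?_)
    exact ⟨Λ, hΛ, rfl⟩
  · by_cases hne : {x : ℝ | ∃ Λ, IsBoseSymExtendible dB k Λ ∧
        x = Fid (tensorId Γ ρ) (idTensor Λ (tensorId Γ ρ))}.Nonempty
    · obtain ⟨x, hx⟩ := hne
      refine le_trans ?_ (le_csSup hbdd hx)
      obtain ⟨Λ, hΛ, rfl⟩ := hx
      exact Stmt15Aux.Fid_nonneg
    · rw [Set.not_nonempty_iff_eq_empty] at hne
      rw [hne, Real.sSup_empty]
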